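/- arXiv:1705.09770 — 2 statements merged into one kernel-verified Lean document; each statement's English description precedes it below -/
import Mathlib

section
/- Let L(θ) = (w/ln 10)·ln(Δh/sin θ) + g₃·(1 − cos θ)² on (0, π/2) with w = 20, g₃ = 15, Δh > 0. Then L attains a unique global minimum at the angle θ* ∈ (0, π/2) satisfying 2g₃·cos³ θ* − 2g₃·cos² θ* − (w/ln 10 + 2g₃)·cos θ* + 2g₃ = 0. -/
/-!
Substituting `c = cos θ` and `sin θ = √(1 - c²)` turns the loss into
`k log Δh - (k/2) log (1 - c²) + g (1 - c)²` with `k = w / ln 10`. On `(-1, 1)` its derivative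
`k c / (1 - c²) - 2g (1 - c)` is strictly increasing, so the function is strictly convex, and the
derivative vanishes exactly where the cubic `2g c³ - 2g c² - (k + 2g) c + 2g` does. That cubic is
`2g > 0` at `c = 0` and `-k < 0` at `c = 1`, so it has a root `c* ∈ (0, 1)`, the unique strict
minimiser; `θ* = arccos c*` then lies in `(0, π/2)`, where `cos` is injective.
-/

open Real Set

noncomputable def cosLoss (k g c : ℝ) : ℝ := -(k / 2) * log (1 - c ^ 2) + g * (1 - c) ^ 2

theorem StrictConvexOn.lt_of_hasDerivAt_eq_zero {S : Set ℝ} {f : ℝ → ℝ} {c : ℝ}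
    (hf : StrictConvexOn ℝ S f) (hc : c ∈ interior S) (hfc : HasDerivAt f 0 c) :
    ∀ x ∈ S, x ≠ c → f c < f x := by
  have hmin : IsMinOn f S c := hf.convexOn.isMinOn_of_rightDeriv_eq_zero hc
    (hfc.hasDerivWithinAt.derivWithin (uniqueDiffWithinAt_Ioi c))
  intro x hx hne
  refine (hmin hx).lt_of_ne fun heq => hne ?_
  have hmin_x : IsMinOn f S x := fun y hy => heq ▸ hmin hy
  exact hf.eq_of_isMinOn hmin_x hmin hx (interior_subset hc)

theorem strictMonoOn_div_one_sub_sq : StrictMonoOn (fun x : ℝ => x / (1 - x ^ 2)) (Ioo (-1) 1) := by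
  rintro x ⟨hx₁, hx₂⟩ y ⟨hy₁, hy₂⟩ hxy
  have hx : 0 < 1 - x ^ 2 := by nlinarith
  have hy : 0 < 1 - y ^ 2 := by nlinarith
  rw [div_lt_div_iff₀ hx hy]
  -- `y (1 - x²) - x (1 - y²) = (y - x)(1 + x y)`
  nlinarith [mul_pos (sub_pos.2 hxy) (show 0 < 1 + x * y by nlinarith)]

theorem hasDerivAt_cosLoss (k g : ℝ) {x : ℝ} (hx : x ∈ Ioo (-1 : ℝ) 1) :
    HasDerivAt (cosLoss k g) (k * x / (1 - x ^ 2) - 2 * g * (1 - x)) x := by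
  have hne : 1 - x ^ 2 ≠ 0 := by nlinarith [hx.1, hx.2]
  have hlog : HasDerivAt (fun c : ℝ => log (1 - c ^ 2)) (-(2 * x) / (1 - x ^ 2)) x := by
    simpa using ((hasDerivAt_pow 2 x).const_sub 1).log hne
  have hsq : HasDerivAt (fun c : ℝ => (1 - c) ^ 2) (2 * (1 - x) * (-1)) x := by
    simpa using ((hasDerivAt_id x).const_sub 1).fun_pow 2
  exact ((hlog.const_mul (-(k / 2))).add (hsq.const_mul g)).congr_deriv (by ring)

theorem strictConvexOn_cosLoss {k g : ℝ} (hk : 0 ≤ k) (hg : 0 < g) :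
    StrictConvexOn ℝ (Ioo (-1) 1) (cosLoss k g) := by
  refine StrictMonoOn.strictConvexOn_of_deriv (convex_Ioo _ _)
    (fun x hx => (hasDerivAt_cosLoss k g hx).continuousAt.continuousWithinAt) ?_
  rw [interior_Ioo]
  intro x hx y hy hxy
  rw [(hasDerivAt_cosLoss k g hx).deriv, (hasDerivAt_cosLoss k g hy).deriv, mul_div_assoc,
    mul_div_assoc]
  have := mul_le_mul_of_nonneg_left (strictMonoOn_div_one_sub_sq hx hy hxy).le hk
  nlinarith

theorem hasDerivAt_cosLoss_eq_zero {k g c : ℝ} (hc : c ∈ Ioo (-1 : ℝ) 1)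
    (hcubic : 2 * g * c ^ 3 - 2 * g * c ^ 2 - (k + 2 * g) * c + 2 * g = 0) :
    HasDerivAt (cosLoss k g) 0 c := by
  convert hasDerivAt_cosLoss k g hc using 1
  have hne : 1 - c ^ 2 ≠ 0 := by nlinarith [hc.1, hc.2]
  -- `(1 - c²) · cosLoss' c` is minus the cubic
  field_simp
  linear_combination hcubic

theorem exists_cubic_root_mem_Ioo {k g : ℝ} (hk : 0 < k) (hg : 0 < g) :
    ∃ c ∈ Ioo (0 : ℝ) 1, 2 * g * c ^ 3 - 2 * g * c ^ 2 - (k + 2 * g) * c + 2 * g = 0 := by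
  have hcont : ContinuousOn (fun c : ℝ => 2 * g * c ^ 3 - 2 * g * c ^ 2 - (k + 2 * g) * c + 2 * g)
      (Icc 0 1) := by fun_prop
  exact intermediate_value_Ioo' zero_le_one hcont ⟨by linarith, by linarith⟩

theorem loss_eq_cosLoss (k g : ℝ) {Δh θ : ℝ} (hΔh : Δh ≠ 0) (hθ : θ ∈ Ioo 0 π) :
    k * log (Δh / sin θ) + g * (1 - cos θ) ^ 2 = k * log Δh + cosLoss k g (cos θ) := by
  have hsin : sin θ ≠ 0 := (sin_pos_of_pos_of_lt_pi hθ.1 hθ.2).ne'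
  rw [cosLoss, ← sin_sq, log_div hΔh hsin, log_pow]
  push_cast
  ring

theorem cos_mem_Ioo_zero_one {θ : ℝ} (hθ : θ ∈ Ioo 0 (π / 2)) : cos θ ∈ Ioo 0 1 := by
  refine ⟨cos_pos_of_mem_Ioo ⟨by linarith [hθ.1, pi_pos], hθ.2⟩, ?_⟩
  simpa using cos_lt_cos_of_nonneg_of_le_pi le_rfl (by linarith [hθ.2, pi_pos]) hθ.1

theorem exists_strict_min_loss {Δh k g : ℝ} (hΔh : Δh ≠ 0) (hk : 0 < k) (hg : 0 < g) :
    ∃ θs ∈ Ioo (0 : ℝ) (π / 2),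
      2 * g * cos θs ^ 3 - 2 * g * cos θs ^ 2 - (k + 2 * g) * cos θs + 2 * g = 0 ∧
      ∀ θ ∈ Ioo (0 : ℝ) (π / 2), θ ≠ θs →
        k * log (Δh / sin θs) + g * (1 - cos θs) ^ 2 < k * log (Δh / sin θ) + g * (1 - cos θ) ^ 2 := by
  obtain ⟨c, hc, hcubic⟩ := exists_cubic_root_mem_Ioo hk hg
  have hc' : c ∈ Ioo (-1 : ℝ) 1 := ⟨by linarith [hc.1], hc.2⟩
  have hmin := (strictConvexOn_cosLoss hk.le hg).lt_of_hasDerivAt_eq_zero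
    (by rwa [interior_Ioo]) (hasDerivAt_cosLoss_eq_zero hc' hcubic)
  have hcos : cos (arccos c) = c := cos_arccos hc'.1.le hc'.2.le
  have hθs : arccos c ∈ Ioo 0 (π / 2) := ⟨arccos_pos.2 hc.2, arccos_lt_pi_div_two.2 hc.1⟩
  have hπ : ∀ {θ}, θ ∈ Ioo 0 (π / 2) → θ ∈ Ioo 0 π := fun hθ => ⟨hθ.1, by linarith [hθ.2, pi_pos]⟩
  refine ⟨arccos c, hθs, by rwa [hcos], fun θ hθ hne => ?_⟩
  rw [loss_eq_cosLoss k g hΔh (hπ hθ), loss_eq_cosLoss k g hΔh (hπ hθs), hcos]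
  have hcosθ := cos_mem_Ioo_zero_one hθ
  refine add_lt_add_right (hmin (cos θ) ⟨by linarith [hcosθ.1], hcosθ.2⟩ fun h => hne ?_) _
  rw [← h, arccos_cos (hπ hθ).1.le (hπ hθ).2.le]

/-- `L(θ) = (w/ln 10)·ln(Δh/sin θ) + g₃·(1 − cos θ)²` (w = 20, g₃ = 15, Δh > 0) attains a
unique global minimum on `(0, π/2)` at the angle `θ*` satisfying
`2g₃ cos³θ* − 2g₃ cos²θ* − (w/ln 10 + 2g₃) cos θ* + 2g₃ = 0`. -/
theorem stmt5 (Δh : ℝ) (hΔh : 0 < Δh) :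
    ∃ θs ∈ Set.Ioo (0 : ℝ) (Real.pi / 2),
      (2 * 15 * Real.cos θs ^ 3 - 2 * 15 * Real.cos θs ^ 2
        - (20 / Real.log 10 + 2 * 15) * Real.cos θs + 2 * 15 = 0) ∧
      ∀ θ ∈ Set.Ioo (0 : ℝ) (Real.pi / 2), θ ≠ θs →
        (20 / Real.log 10) * Real.log (Δh / Real.sin θs) + 15 * (1 - Real.cos θs) ^ 2
          < (20 / Real.log 10) * Real.log (Δh / Real.sin θ) + 15 * (1 - Real.cos θ) ^ 2 :=
  exists_strict_min_loss hΔh.ne' (div_pos (by norm_num) (log_pos (by norm_num))) (by norm_num)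
end

section
/- For a single user at fixed altitude difference Δh > 0 and zero 2D horizontal offset in y, the function h(x) = (w/ln 10)·ln(√(x² + Δh²)) + g₃·(1 − x/√(x² + Δh²))² of the horizontal distance x > 0 satisfies: h is strictly decreasing near 0⁺ at rate dominated by the g₃ term and strictly increasing as x → ∞; hence h attains a minimum at some x* ∈ (0, ∞). -/
/-!
With `s = √(x² + c²)`, the identity `1 - x / s = c² / (s (s + x))` gives
`h'(x) = (a x s² (s + x) - 2 b c⁴) / (s⁴ (s + x))`. The numerator tends to `-2 b c⁴ < 0` as
`x → 0⁺` and grows like `a x⁴`, so `h` decreases on an explicit interval `(0, ε)` and increases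
beyond an explicit `M`. A minimum of `h` on the compact interval `[ε/2, max M (ε/2) + 1]` is
then a minimum on all of `(0, ∞)`.
-/

open Real Set

theorem exists_isMinOn_Ioi_of_strictAntiOn_of_strictMonoOn {β : Type*} [LinearOrder β]
    [TopologicalSpace β] [OrderClosedTopology β] {f : ℝ → β} {ε M : ℝ} (hε : 0 < ε)
    (hf : ContinuousOn f (Ioi 0)) (h_anti : StrictAntiOn f (Ioo 0 ε))
    (h_mono : StrictMonoOn f (Ioi M)) : ∃ x₀ ∈ Ioi (0 : ℝ), IsMinOn f (Ioi 0) x₀ := by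
  set l := ε / 2
  set r := max M l + 1
  have hl : l ∈ Ioo 0 ε := ⟨half_pos hε, half_lt_self hε⟩
  have hr : r ∈ Ioi M := by simp only [mem_Ioi, r]; linarith [le_max_left M l]
  have hlr : l ≤ r := by simp only [r]; linarith [le_max_right M l]
  have hK : Icc l r ⊆ Ioi 0 := fun x hx => lt_of_lt_of_le hl.1 hx.1
  obtain ⟨x₀, hx₀, hmin⟩ := isCompact_Icc.exists_isMinOn (nonempty_Icc.2 hlr) (hf.mono hK)
  refine ⟨x₀, hK hx₀, fun y (hy : 0 < y) => ?_⟩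
  rcases lt_or_ge y l with hyl | hly
  · exact (hmin ⟨le_rfl, hlr⟩).trans (h_anti ⟨hy, hyl.trans hl.2⟩ hl hyl).le
  rcases le_or_gt y r with hyr | hry
  · exact hmin ⟨hly, hyr⟩
  · exact (hmin ⟨hlr, le_rfl⟩).trans (h_mono hr (mem_Ioi.2 (lt_trans hr hry)) hry).le

/-- `a = w / ln 10`, `b = g₃`, `c = Δh` in the notation of the paper. -/
noncomputable def pathLoss (a b c x : ℝ) : ℝ :=
  a * log (√(x ^ 2 + c ^ 2)) + b * (1 - x / √(x ^ 2 + c ^ 2)) ^ 2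

theorem hasDerivAt_pathLoss (a b : ℝ) {c : ℝ} (hc : c ≠ 0) (x : ℝ) :
    HasDerivAt (pathLoss a b c)
      ((a * x * √(x ^ 2 + c ^ 2) ^ 2 * (√(x ^ 2 + c ^ 2) + x) - 2 * b * c ^ 4) /
        (√(x ^ 2 + c ^ 2) ^ 4 * (√(x ^ 2 + c ^ 2) + x))) x := by
  have hq : 0 < x ^ 2 + c ^ 2 := by positivity
  set s := √(x ^ 2 + c ^ 2) with hs_def
  have hs : 0 < s := sqrt_pos.2 hq
  have hs2 : s ^ 2 = x ^ 2 + c ^ 2 := sq_sqrt hq.le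
  have hsx : 0 < s + x := by
    have : |x| < s := by
      rw [← sqrt_sq_eq_abs]
      exact sqrt_lt_sqrt (sq_nonneg x) (lt_add_of_pos_right _ (by positivity))
    linarith [neg_abs_le x]
  have hs' : HasDerivAt (fun y => √(y ^ 2 + c ^ 2)) (x / s) x := by
    convert ((hasDerivAt_pow 2 x).add_const (c ^ 2)).sqrt hq.ne' using 1
    rw [← hs_def]
    simp only [Nat.cast_ofNat, Nat.add_one_sub_one, pow_one]
    field_simp
  have hratio : HasDerivAt (fun y => y / √(y ^ 2 + c ^ 2)) (c ^ 2 / s ^ 3) x := by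
    refine ((hasDerivAt_id' x).div hs' hs.ne').congr_deriv ?_
    rw [← hs_def]
    field_simp
    linear_combination hs2
  refine (((hs'.log hs.ne').const_mul a).add
    (((hratio.const_sub 1).pow 2).const_mul b)).congr_deriv ?_
  rw [← hs_def]
  simp only [Nat.cast_ofNat, Nat.add_one_sub_one, pow_one]
  field_simp
  linear_combination (-2 * b * c ^ 2) * hs2

theorem continuous_pathLoss (a b : ℝ) {c : ℝ} (hc : c ≠ 0) : Continuous (pathLoss a b c) :=
  continuous_iff_continuousAt.2 fun x => (hasDerivAt_pathLoss a b hc x).continuousAt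

theorem strictAntiOn_pathLoss {a b c : ℝ} (ha : 0 < a) (hc : 0 < c) :
    StrictAntiOn (pathLoss a b c) (Ioo 0 (min c (b * c / (3 * a)))) := by
  refine strictAntiOn_of_deriv_neg (convex_Ioo _ _)
    (continuous_pathLoss a b hc.ne').continuousOn fun x hx => ?_
  rw [interior_Ioo] at hx
  obtain ⟨hx0, hxc, hxb⟩ : 0 < x ∧ x < c ∧ x < b * c / (3 * a) := ⟨hx.1, lt_min_iff.1 hx.2⟩
  rw [(hasDerivAt_pathLoss a b hc.ne' x).deriv]
  have hq : 0 < x ^ 2 + c ^ 2 := by positivity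
  set s := √(x ^ 2 + c ^ 2)
  have hs2 : s ^ 2 = x ^ 2 + c ^ 2 := sq_sqrt hq.le
  have hs2c : s ^ 2 < 2 * c ^ 2 := by nlinarith
  have hsc : s < 2 * c := by nlinarith
  have hxb' : 3 * a * x < b * c := by rwa [lt_div_iff₀ (by positivity), mul_comm] at hxb
  refine div_neg_of_neg_of_pos (sub_neg.2 ?_) (by positivity)
  calc a * x * s ^ 2 * (s + x) < a * x * (2 * c ^ 2) * (3 * c) := by
        gcongr
        linarith
    _ = 2 * (3 * a * x) * c ^ 3 := by ring
    _ < 2 * (b * c) * c ^ 3 := by gcongr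
    _ = 2 * b * c ^ 4 := by ring

theorem strictMonoOn_pathLoss {a b c : ℝ} (ha : 0 < a) (hb : 0 ≤ b) (hc : 0 < c) :
    StrictMonoOn (pathLoss a b c) (Ioi (2 * b * c / a)) := by
  refine strictMonoOn_of_deriv_pos (convex_Ioi _)
    (continuous_pathLoss a b hc.ne').continuousOn fun x hx => ?_
  rw [interior_Ioi, mem_Ioi, div_lt_iff₀ ha] at hx
  have hx0 : 0 < x := by nlinarith [mul_nonneg hb hc.le]
  rw [(hasDerivAt_pathLoss a b hc.ne' x).deriv]
  set s := √(x ^ 2 + c ^ 2)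
  have hcs : c ≤ s := le_sqrt_of_sq_le (le_add_of_nonneg_left (sq_nonneg x))
  refine div_pos (sub_pos.2 ?_) (by positivity)
  calc 2 * b * c ^ 4 = (2 * b * c) * c ^ 3 := by ring
    _ < (x * a) * c ^ 3 := by gcongr
    _ = a * x * c ^ 2 * c := by ring
    _ ≤ a * x * s ^ 2 * (s + x) := by gcongr; linarith

/-- The single-user path loss `h(x) = (w/ln 10)·ln √(x² + Δh²) + g₃·(1 − x/√(x² + Δh²))²`
(w = 20, g₃ = 15, Δh > 0) is strictly decreasing near `0⁺`, strictly increasing for large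
`x`, and attains a minimum at some `x* ∈ (0, ∞)`. -/
theorem stmt10 (Δh : ℝ) (hΔh : 0 < Δh) :
    ∃ h : ℝ → ℝ, (h = fun x : ℝ => (20 / Real.log 10) * Real.log (Real.sqrt (x ^ 2 + Δh ^ 2))
        + 15 * (1 - x / Real.sqrt (x ^ 2 + Δh ^ 2)) ^ 2) ∧
      (∃ ε > (0 : ℝ), StrictAntiOn h (Set.Ioo 0 ε)) ∧
      (∃ M > (0 : ℝ), StrictMonoOn h (Set.Ioi M)) ∧
      (∃ xs ∈ Set.Ioi (0 : ℝ), IsMinOn h (Set.Ioi 0) xs) := by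
  have ha : 0 < 20 / log 10 := div_pos (by norm_num) (log_pos (by norm_num))
  have hε : 0 < min Δh (15 * Δh / (3 * (20 / log 10))) := lt_min hΔh (by positivity)
  have hanti := strictAntiOn_pathLoss (b := 15) ha hΔh
  have hmono := strictMonoOn_pathLoss ha (b := 15) (by norm_num) hΔh
  refine ⟨pathLoss (20 / log 10) 15 Δh, rfl, ⟨_, hε, hanti⟩, ⟨_, by positivity, hmono⟩, ?_⟩
  exact exists_isMinOn_Ioi_of_strictAntiOn_of_strictMonoOn hε
    (continuous_pathLoss _ _ hΔh.ne').continuousOn hanti hmono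
end
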